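/- arXiv:1503.06437 — 3 statements merged into one kernel-verified Lean document; each statement's English description precedes it below -/
import Mathlib

section
/- (Lemma 1, secrecy-constraint reformulation.) Let n ≥ 1, let w, h_s, h_e ∈ ℂⁿ, let σ_s, σ_e > 0 and R ≥ 0, and assume that w^H h_s is a nonnegative real number. Define b = ((2^{R/2}/σ_e)·w^H h_e, (2^R − 1)^{1/2}) ∈ ℂ² and the 3×3 Hermitian matrix S = [[(w^H h_s/σ_s)·I₂, b], [b^H, w^H h_s/σ_s]]. Then the secrecy-rate constraint log₂(1 + |h_s^H w|²/σ_s²) − log₂(1 + |h_e^H w|²/σ_e²) ≥ R holds if and only if S is positive semidefinite. -/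
/-!
Write `a = w^H h_s / σ_s ≥ 0` for the diagonal of `S`. If `a > 0`, the Schur complement of the
block `a • I₂` is the scalar `a - ‖b‖² / a`, so `S` is positive semidefinite iff `‖b‖² ≤ a²`. If
`a = 0`, `S` has trace zero, so it is positive semidefinite only when it vanishes, i.e. when
`b = 0`. Finally `‖b‖² ≤ a²` is the secrecy-rate inequality after exponentiating:
`2^R (1 + |h_e^H w|²/σ_e²) ≤ 1 + |h_s^H w|²/σ_s²`.
-/

open scoped ComplexOrder

/-- The 3×3 Hermitian matrix `S = [[(w^H h_s/σ_s)·I₂, b], [bᴴ, w^H h_s/σ_s]]` with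
`b = ((2^{R/2}/σ_e)·w^H h_e, (2^R − 1)^{1/2})`. -/
noncomputable def Smat2 (n : ℕ) (w hs he : EuclideanSpace ℂ (Fin n)) (σs σe R : ℝ) :
    Matrix (Fin 2 ⊕ Unit) (Fin 2 ⊕ Unit) ℂ :=
  let b : Fin 2 → ℂ :=
    ![((((2 : ℝ) ^ (R / 2) / σe : ℝ)) : ℂ) * (inner ℂ w he : ℂ),
      ((Real.sqrt ((2 : ℝ) ^ R - 1) : ℝ) : ℂ)]
  Matrix.fromBlocks (((inner ℂ w hs : ℂ) / (σs : ℂ)) • 1)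
    (Matrix.of fun i (_ : Unit) => b i)
    (Matrix.of fun (_ : Unit) j => (starRingEnd ℂ) (b j))
    (Matrix.of fun (_ : Unit) (_ : Unit) => (inner ℂ w hs : ℂ) / (σs : ℂ))

open Matrix

section Blocks

variable {𝕜 : Type*} [RCLike 𝕜] {m n : Type*} [Fintype m] [Fintype n]

theorem Matrix.posSemidef_fromBlocks_zero_iff (B : Matrix m n 𝕜) :
    (fromBlocks 0 B Bᴴ 0).PosSemidef ↔ B = 0 := by
  refine ⟨fun h => ?_, fun h => by simpa [h] using PosSemidef.zero⟩
  have h0 := h.trace_eq_zero_iff.1 (by simp [trace, Fintype.sum_sum_type])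
  ext i j
  simpa using congr_fun₂ h0 (Sum.inl i) (Sum.inr j)

variable [DecidableEq m] [DecidableEq n]

theorem Matrix.posSemidef_fromBlocks_smul_one_iff {a : ℝ} (ha : 0 < a) (B : Matrix m n 𝕜) :
    (fromBlocks ((a : 𝕜) • 1) B Bᴴ ((a : 𝕜) • 1)).PosSemidef ↔
      (((a ^ 2 : ℝ) : 𝕜) • 1 - Bᴴ * B).PosSemidef := by
  have ha' : (a : 𝕜) ≠ 0 := by exact_mod_cast ha.ne'
  have hA : ((a : 𝕜) • (1 : Matrix m m 𝕜)).PosDef := PosDef.one.smul (by exact_mod_cast ha)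
  let := hA.isUnit.invertible
  have hinv : ((a : 𝕜) • (1 : Matrix m m 𝕜))⁻¹ = (a⁻¹ : 𝕜) • 1 := by
    rw [inv_eq_left_inv]
    rw [smul_mul_smul, inv_mul_cancel₀ ha', one_smul, one_mul]
  have hschur : (a : 𝕜) • 1 - Bᴴ * ((a : 𝕜) • (1 : Matrix m m 𝕜))⁻¹ * B
      = a⁻¹ • (((a ^ 2 : ℝ) : 𝕜) • 1 - Bᴴ * B) := by
    rw [hinv, RCLike.real_smul_eq_coe_smul (K := 𝕜) a⁻¹]
    simp only [Matrix.mul_smul, Matrix.mul_one, Matrix.smul_mul, smul_sub, smul_smul]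
    push_cast
    congr 2
    field_simp
  rw [PosDef.fromBlocks₁₁ _ _ hA, hschur]
  refine ⟨fun h => ?_, fun h => h.smul (inv_nonneg.2 ha.le)⟩
  simpa [smul_smul, ha.ne'] using h.smul ha.le

theorem Matrix.posSemidef_fromBlocks_smul_one_replicateCol_iff {a : ℝ} (ha : 0 ≤ a)
    (b : m → 𝕜) :
    (fromBlocks ((a : 𝕜) • 1) (replicateCol Unit b) (replicateCol Unit b)ᴴ
      ((a : 𝕜) • 1)).PosSemidef ↔ ∑ i, ‖b i‖ ^ 2 ≤ a ^ 2 := by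
  rcases ha.eq_or_lt with rfl | ha
  · have hsum : ∑ i, ‖b i‖ ^ 2 ≤ 0 ↔ b = 0 := by
      rw [(Finset.sum_nonneg fun i _ => sq_nonneg ‖b i‖).ge_iff_eq',
        Finset.sum_eq_zero_iff_of_nonneg fun i _ => sq_nonneg _]
      simp [funext_iff]
    simp only [RCLike.ofReal_zero, zero_smul, posSemidef_fromBlocks_zero_iff]
    rw [zero_pow two_ne_zero, hsum]
    exact (replicateCol_injective (ι := Unit)).eq_iff' rfl
  · rw [posSemidef_fromBlocks_smul_one_iff ha]
    have hcompl : ((a ^ 2 : ℝ) : 𝕜) • 1 - (replicateCol Unit b)ᴴ * replicateCol Unit b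
        = diagonal fun _ => ((a ^ 2 - ∑ i, ‖b i‖ ^ 2 : ℝ) : 𝕜) := by
      ext
      simp [dotProduct, RCLike.conj_mul]
    rw [hcompl, posSemidef_diagonal_iff]
    simp only [RCLike.ofReal_nonneg, sub_nonneg, forall_const]

end Blocks

theorem Real.le_logb_sub_logb_iff {b x y t : ℝ} (hb : 1 < b) (hx : 0 < x) (hy : 0 < y) :
    t ≤ Real.logb b x - Real.logb b y ↔ b ^ t * y ≤ x := by
  rw [← Real.logb_div hx.ne' hy.ne', Real.le_logb_iff_rpow_le hb (div_pos hx hy), le_div_iff₀ hy]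

theorem Smat2_eq_fromBlocks {n : ℕ} (w hs he : EuclideanSpace ℂ (Fin n)) (σs σe R r : ℝ)
    (hr : inner ℂ w hs = (r : ℂ)) :
    Smat2 n w hs he σs σe R =
      fromBlocks (((r / σs : ℝ) : ℂ) • 1)
        (replicateCol Unit ![((2 ^ (R / 2) / σe : ℝ) : ℂ) * inner ℂ w he, (√(2 ^ R - 1) : ℂ)])
        (replicateCol Unit ![((2 ^ (R / 2) / σe : ℝ) : ℂ) * inner ℂ w he, (√(2 ^ R - 1) : ℂ)])ᴴ
        (((r / σs : ℝ) : ℂ) • 1) := by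
  rw [Smat2, hr, fromBlocks_inj]
  refine ⟨by push_cast; rfl, rfl, rfl, ?_⟩
  ext
  simp

theorem posSemidef_Smat2_iff {n : ℕ} (w hs he : EuclideanSpace ℂ (Fin n)) {σs σe R r : ℝ}
    (hσs : 0 < σs) (hR : 0 ≤ R) (hr0 : 0 ≤ r) (hr : inner ℂ w hs = (r : ℂ)) :
    (Smat2 n w hs he σs σe R).PosSemidef ↔
      2 ^ R / σe ^ 2 * ‖inner ℂ w he‖ ^ 2 + (2 ^ R - 1) ≤ (r / σs) ^ 2 := by
  have hpow : ((2 : ℝ) ^ (R / 2)) ^ 2 = 2 ^ R := by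
    rw [← Real.rpow_natCast, ← Real.rpow_mul zero_le_two]
    norm_num
  have hsqrt : √(2 ^ R - 1) ^ 2 = 2 ^ R - 1 :=
    Real.sq_sqrt (sub_nonneg.2 (Real.one_le_rpow one_le_two hR))
  rw [Smat2_eq_fromBlocks w hs he σs σe R r hr]
  refine (posSemidef_fromBlocks_smul_one_replicateCol_iff (𝕜 := ℂ)
    (div_nonneg hr0 hσs.le) _).trans ?_
  simp [Fin.sum_univ_two, mul_pow, div_pow, hpow, hsqrt]

theorem stmt2_general (n : ℕ) (w hs he : EuclideanSpace ℂ (Fin n))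
    (σs σe R : ℝ) (hσs : 0 < σs) (hR : 0 ≤ R)
    (hreal : ∃ r : ℝ, 0 ≤ r ∧ (inner ℂ w hs : ℂ) = (r : ℂ)) :
    Real.logb 2 (1 + ‖(inner ℂ hs w : ℂ)‖ ^ 2 / σs ^ 2)
        - Real.logb 2 (1 + ‖(inner ℂ he w : ℂ)‖ ^ 2 / σe ^ 2) ≥ R ↔
      (Smat2 n w hs he σs σe R).PosSemidef := by
  obtain ⟨r, hr0, hr⟩ := hreal
  have hsw : ‖inner ℂ hs w‖ = r := by
    rw [norm_inner_symm, hr, Complex.norm_real, Real.norm_of_nonneg hr0]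
  rw [posSemidef_Smat2_iff w hs he hσs hR hr0 hr, ge_iff_le,
    Real.le_logb_sub_logb_iff one_lt_two (by positivity) (by positivity), norm_inner_symm he w, hsw,
    ← sub_nonneg, ← sub_nonneg (a := (r / σs) ^ 2)]
  ring_nf

/-- Lemma 1: assuming `w^H h_s` is a nonnegative real, the secrecy-rate
constraint holds iff `S` is positive semidefinite. -/
theorem stmt2 (n : ℕ) (hn : 1 ≤ n) (w hs he : EuclideanSpace ℂ (Fin n))
    (σs σe R : ℝ) (hσs : 0 < σs) (hσe : 0 < σe) (hR : 0 ≤ R)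
    (hreal : ∃ r : ℝ, 0 ≤ r ∧ (inner ℂ w hs : ℂ) = (r : ℂ)) :
    Real.logb 2 (1 + ‖(inner ℂ hs w : ℂ)‖ ^ 2 / σs ^ 2)
        - Real.logb 2 (1 + ‖(inner ℂ he w : ℂ)‖ ^ 2 / σe ^ 2) ≥ R ↔
      (Smat2 n w hs he σs σe R).PosSemidef :=
  stmt2_general n w hs he σs σe R hσs hR hreal
end

section
/- (Theorem 2, rank-one tightness of the inner secrecy-rate maximization with perfect CSI.) Let n, K, L ≥ 1; let h_s, h_{e,k} (k = 1,…,K), h_l (l = 1,…,L) ∈ ℂⁿ; let σ_s, σ_e > 0, P > 0, p_i > 0 (i = 1,…,n), E_l > 0, and t ∈ (0,1]. Define the feasible set F_t of pairs (Q, W) of n×n PSD complex matrices satisfying: (i) for every k, h_{e,k}^H (Q − (1/t − 1)·W) h_{e,k} ≤ (1/t − 1)·σ_e²; (ii) Tr(Q + W) ≤ P; (iii) for every i, the i-th diagonal entry of Q + W is at most p_i; (iv) for every l, h_l^H (Q + W) h_l ≥ E_l. Define φ(Q, W) = (h_s^H Q h_s)/(h_s^H W h_s + σ_s²). If F_t is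 nonempty, then there exists (Q*, W*) ∈ F_t with rank(Q*) ≤ 1 and φ(Q*, W*) ≥ φ(Q, W) for every (Q, W) ∈ F_t. -/
open Matrix
open scoped ComplexOrder

/-- Feasible set `F_t` of the inner secrecy-rate maximization (perfect CSI). -/
def Feas5 (n K L : ℕ) (he : Fin K → (Fin n → ℂ)) (hl : Fin L → (Fin n → ℂ))
    (σe P : ℝ) (p : Fin n → ℝ) (E : Fin L → ℝ) (t : ℝ)
    (Q W : Matrix (Fin n) (Fin n) ℂ) : Prop :=
  Q.PosSemidef ∧ W.PosSemidef ∧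
  (∀ k, (star (he k) ⬝ᵥ ((Q - (((1 / t - 1 : ℝ)) : ℂ) • W) *ᵥ he k)).re ≤
      (1 / t - 1) * σe ^ 2) ∧
  (Q + W).trace.re ≤ P ∧
  (∀ i, ((Q + W) i i).re ≤ p i) ∧
  (∀ l, E l ≤ (star (hl l) ⬝ᵥ ((Q + W) *ᵥ hl l)).re)

/-- Objective `φ(Q,W) = h_s^H Q h_s / (h_s^H W h_s + σ_s²)`. -/
noncomputable def phi5 (n : ℕ) (hs : Fin n → ℂ) (σs : ℝ)
    (Q W : Matrix (Fin n) (Fin n) ℂ) : ℝ :=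
  (star hs ⬝ᵥ (Q *ᵥ hs)).re / ((star hs ⬝ᵥ (W *ᵥ hs)).re + σs ^ 2)

/-! The feasible set is compact (positive semidefinite matrices of bounded trace have bounded
entries) and `φ` is continuous on it, so `φ` attains its maximum at some `(Q, W)`. Along
`h = h_s`, replace `Q` by the rank-one matrix `Q' = (Q h)(Q h)ᴴ / (hᴴ Q h)` and move the
remainder `Q - Q'`, which is positive semidefinite by Cauchy–Schwarz, into `W`. This leaves
`Q + W`, `hᴴ Q h` and `hᴴ W h` unchanged, and changes every eavesdropper term
`gᴴ (Q - (1/t - 1) W) g` by `-(1/t) gᴴ (Q - Q') g ≤ 0`; so `(Q', W + Q - Q')` is again a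
feasible maximizer. -/

namespace Matrix

variable {n 𝕜 : Type*} [Fintype n] [RCLike 𝕜] {A : Matrix n n 𝕜}

lemma PosSemidef.norm_sq_dotProduct_mulVec_le (hA : A.PosSemidef) (x y : n → 𝕜) :
    ‖star x ⬝ᵥ (A *ᵥ y)‖ ^ 2 ≤
      RCLike.re (star x ⬝ᵥ (A *ᵥ x)) * RCLike.re (star y ⬝ᵥ (A *ᵥ y)) := by
  let := A.toSeminormedAddCommGroup hA
  let := A.toInnerProductSpace hA
  have inner_eq (u v : n → 𝕜) : inner 𝕜 u v = star u ⬝ᵥ (A *ᵥ v) := dotProduct_comm _ _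
  have cs := inner_mul_inner_self_le (𝕜 := 𝕜) x y
  rwa [norm_inner_symm y x, ← sq, inner_eq, inner_eq, inner_eq] at cs

lemma PosSemidef.re_diag_le_re_trace (hA : A.PosSemidef) (i : n) :
    RCLike.re (A i i) ≤ RCLike.re A.trace := by
  rw [trace, map_sum]
  exact Finset.single_le_sum (f := fun j => RCLike.re (A j j))
    (fun _ _ => (RCLike.nonneg_iff.mp hA.diag_nonneg).1) (Finset.mem_univ i)

lemma PosSemidef.norm_apply_le_re_trace (hA : A.PosSemidef) (i j : n) :
    ‖A i j‖ ≤ RCLike.re A.trace := by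
  classical
  have cs := hA.norm_sq_dotProduct_mulVec_le (Pi.single i 1) (Pi.single j 1)
  simp only [Pi.star_single, star_one, mulVec_single, MulOpposite.op_one, one_smul,
    single_dotProduct, col_apply, one_mul] at cs
  have hi := hA.re_diag_le_re_trace i
  have hj := hA.re_diag_le_re_trace j
  have hi0 := (RCLike.nonneg_iff.mp (hA.diag_nonneg (i := i))).1
  have hj0 := (RCLike.nonneg_iff.mp (hA.diag_nonneg (i := j))).1
  nlinarith [norm_nonneg (A i j)]

lemma isClosed_setOf_posSemidef : IsClosed {A : Matrix n n 𝕜 | A.PosSemidef} := by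
  simp only [posSemidef_iff_dotProduct_mulVec, Set.ofPred_and, Set.ofPred_forall]
  exact (isClosed_eq (by fun_prop) continuous_id).inter
    (isClosed_iInter fun x => isClosed_le continuous_const (by fun_prop))

omit [Fintype n] in
lemma isCompact_setOf_forall_norm_apply_le {m : Type*} (c : ℝ) :
    IsCompact {A : Matrix m n 𝕜 | ∀ i j, ‖A i j‖ ≤ c} := by
  have box : {A : Matrix m n 𝕜 | ∀ i j, ‖A i j‖ ≤ c} =
      Set.univ.pi fun _ => Set.univ.pi fun _ => Metric.closedBall 0 c := by
    ext A
    exact ⟨fun h i _ j _ => mem_closedBall_zero_iff.mpr (h i j),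
      fun h i j => mem_closedBall_zero_iff.mp (h i trivial j trivial)⟩
  rw [box]
  exact isCompact_univ_pi fun _ => isCompact_univ_pi fun _ => isCompact_closedBall 0 c

lemma isCompact_setOf_posSemidef_re_trace_le (c : ℝ) :
    IsCompact {A : Matrix n n 𝕜 | A.PosSemidef ∧ RCLike.re A.trace ≤ c} := by
  have hclosed : IsClosed {A : Matrix n n 𝕜 | A.PosSemidef ∧ RCLike.re A.trace ≤ c} :=
    isClosed_setOf_posSemidef.inter
      (isClosed_le (f := fun A : Matrix n n 𝕜 => RCLike.re A.trace) (by fun_prop) continuous_const)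
  refine (isCompact_setOf_forall_norm_apply_le c).of_isClosed_subset hclosed ?_
  rintro A ⟨hA, htr⟩ i j
  exact (hA.norm_apply_le_re_trace i j).trans htr

/-- The junk value `0⁻¹ = 0` makes this `0` when `hᴴ A h = 0`, which is harmless: for positive
semidefinite `A` the vector `A h` then vanishes anyway. -/
noncomputable def rankOneCompression (A : Matrix n n 𝕜) (h : n → 𝕜) : Matrix n n 𝕜 :=
  (RCLike.re (star h ⬝ᵥ (A *ᵥ h)))⁻¹ • vecMulVec (A *ᵥ h) (star (A *ᵥ h))

variable (h : n → 𝕜)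

lemma rank_rankOneCompression_le (A : Matrix n n 𝕜) : (A.rankOneCompression h).rank ≤ 1 := by
  rw [rankOneCompression, ← smul_vecMulVec]
  exact rank_vecMulVec_le _ _

lemma dotProduct_rankOneCompression_mulVec (A : Matrix n n 𝕜) (x : n → 𝕜) :
    star x ⬝ᵥ (A.rankOneCompression h *ᵥ x) =
      ((RCLike.re (star h ⬝ᵥ (A *ᵥ h)))⁻¹ * ‖star x ⬝ᵥ (A *ᵥ h)‖ ^ 2 : ℝ) := by
  rw [rankOneCompression, smul_mulVec, vecMulVec_mulVec, dotProduct_smul, dotProduct_smul,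
    star_dotProduct (A *ᵥ h) x, op_smul_eq_mul, RCLike.star_def, RCLike.mul_conj,
    RCLike.real_smul_eq_coe_mul]
  push_cast
  rfl

lemma PosSemidef.rankOneCompression (hA : A.PosSemidef) : (A.rankOneCompression h).PosSemidef :=
  (posSemidef_vecMulVec_self_star _).smul (inv_nonneg.mpr (hA.re_dotProduct_nonneg h))

lemma PosSemidef.sub_rankOneCompression (hA : A.PosSemidef) :
    (A - A.rankOneCompression h).PosSemidef := by
  refine .of_dotProduct_mulVec_nonneg (hA.1.sub (hA.rankOneCompression h).1) fun x => ?_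
  rw [sub_mulVec, dotProduct_sub, dotProduct_rankOneCompression_mulVec, RCLike.nonneg_iff]
  have hx := RCLike.nonneg_iff.mp (hA.dotProduct_mulVec_nonneg x)
  have cs := hA.norm_sq_dotProduct_mulVec_le x h
  simp only [map_sub, RCLike.ofReal_re, RCLike.ofReal_im, sub_zero, sub_nonneg, hx.2, and_true]
  rcases (hA.re_dotProduct_nonneg h).eq_or_lt with h0 | hpos
  · simp [← h0, hx.1]
  · rw [inv_mul_le_iff₀ hpos]
    linarith

lemma PosSemidef.dotProduct_rankOneCompression_mulVec_self (hA : A.PosSemidef) :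
    star h ⬝ᵥ (A.rankOneCompression h *ᵥ h) = star h ⬝ᵥ (A *ᵥ h) := by
  set r := RCLike.re (star h ⬝ᵥ (A *ᵥ h))
  have hr : (r : 𝕜) = star h ⬝ᵥ (A *ᵥ h) :=
    RCLike.ext (by simp [r]) (by simp [hA.1.im_star_dotProduct_mulVec_self h])
  rw [dotProduct_rankOneCompression_mulVec, ← hr, RCLike.ofReal_re, RCLike.norm_ofReal, sq_abs,
    sq, ← mul_assoc, inv_mul_mul_self]

end Matrix

section Feasibility

variable {n K L : ℕ} {he : Fin K → (Fin n → ℂ)} {hl : Fin L → (Fin n → ℂ)} {σe P : ℝ}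
  {p : Fin n → ℝ} {E : Fin L → ℝ} {t : ℝ} {Q W Q' : Matrix (Fin n) (Fin n) ℂ}

lemma Feas5.transfer (ht : 0 ≤ t) (hF : Feas5 n K L he hl σe P p E t Q W)
    (hQ' : Q'.PosSemidef) (hQQ' : (Q - Q').PosSemidef) :
    Feas5 n K L he hl σe P p E t Q' (W + (Q - Q')) := by
  obtain ⟨-, hW, heav, htr, hdiag, hharv⟩ := hF
  have hsum : Q' + (W + (Q - Q')) = Q + W := by abel
  refine ⟨hQ', hW.add hQQ', fun k => ?_, hsum ▸ htr, hsum ▸ hdiag, hsum ▸ hharv⟩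
  have hmat : Q' - ((1 / t - 1 : ℝ) : ℂ) • (W + (Q - Q')) =
      (Q - ((1 / t - 1 : ℝ) : ℂ) • W) - ((1 / t : ℝ) : ℂ) • (Q - Q') := by
    push_cast
    module
  rw [hmat, sub_mulVec, dotProduct_sub, smul_mulVec, dotProduct_smul, Complex.sub_re,
    smul_eq_mul, Complex.re_ofReal_mul]
  have hgap : 0 ≤ (star (he k) ⬝ᵥ ((Q - Q') *ᵥ he k)).re := hQQ'.re_dotProduct_nonneg (he k)
  nlinarith [heav k, one_div_nonneg.mpr ht]

lemma phi5_transfer {hs : Fin n → ℂ} {σs : ℝ}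
    (h : star hs ⬝ᵥ (Q' *ᵥ hs) = star hs ⬝ᵥ (Q *ᵥ hs)) :
    phi5 n hs σs Q' (W + (Q - Q')) = phi5 n hs σs Q W := by
  simp only [phi5, add_mulVec, sub_mulVec, dotProduct_add, dotProduct_sub, h, sub_self, add_zero]

lemma isClosed_setOf_feas5 :
    IsClosed {x : Matrix (Fin n) (Fin n) ℂ × Matrix (Fin n) (Fin n) ℂ |
      Feas5 n K L he hl σe P p E t x.1 x.2} := by
  simp only [Feas5, Set.ofPred_and, Set.ofPred_forall]
  exact (isClosed_setOf_posSemidef.preimage continuous_fst).inter <|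
    (isClosed_setOf_posSemidef.preimage continuous_snd).inter <|
    (isClosed_iInter fun k => isClosed_le (by fun_prop) continuous_const).inter <|
    (isClosed_le (by fun_prop) continuous_const).inter <|
    (isClosed_iInter fun i => isClosed_le (by fun_prop) continuous_const).inter <|
    isClosed_iInter fun l => isClosed_le continuous_const (by fun_prop)

lemma isCompact_setOf_feas5 :
    IsCompact {x : Matrix (Fin n) (Fin n) ℂ × Matrix (Fin n) (Fin n) ℂ |
      Feas5 n K L he hl σe P p E t x.1 x.2} := by
  refine ((isCompact_setOf_posSemidef_re_trace_le P).prod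
    (isCompact_setOf_posSemidef_re_trace_le P)).of_isClosed_subset isClosed_setOf_feas5 ?_
  rintro ⟨Q, W⟩ ⟨hQ, hW, -, htr, -⟩
  rw [trace_add, Complex.add_re] at htr
  have hQ0 := (RCLike.nonneg_iff.mp hQ.trace_nonneg).1
  have hW0 := (RCLike.nonneg_iff.mp hW.trace_nonneg).1
  exact ⟨⟨hQ, by simp only [RCLike.re_to_complex] at *; linarith⟩,
    ⟨hW, by simp only [RCLike.re_to_complex] at *; linarith⟩⟩

lemma continuousOn_phi5 (hs : Fin n → ℂ) {σs : ℝ} (hσs : 0 < σs) :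
    ContinuousOn (fun x : Matrix (Fin n) (Fin n) ℂ × Matrix (Fin n) (Fin n) ℂ =>
      phi5 n hs σs x.1 x.2) {x | x.2.PosSemidef} := by
  unfold phi5
  refine ContinuousOn.div (by fun_prop) (by fun_prop) fun x hx => ?_
  have : 0 ≤ (star hs ⬝ᵥ (x.2 *ᵥ hs)).re := hx.re_dotProduct_nonneg hs
  positivity

end Feasibility

theorem stmt5_general (n K L : ℕ)
    (hs : Fin n → ℂ) (he : Fin K → (Fin n → ℂ)) (hl : Fin L → (Fin n → ℂ))
    (σs σe P : ℝ) (p : Fin n → ℝ) (E : Fin L → ℝ) (t : ℝ)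
    (hσs : 0 < σs) (ht0 : 0 < t)
    (hne : ∃ Q W, Feas5 n K L he hl σe P p E t Q W) :
    ∃ Qs Ws, Feas5 n K L he hl σe P p E t Qs Ws ∧ Qs.rank ≤ 1 ∧
      ∀ Q W, Feas5 n K L he hl σe P p E t Q W →
        phi5 n hs σs Q W ≤ phi5 n hs σs Qs Ws := by
  obtain ⟨Q₀, W₀, hF₀⟩ := hne
  obtain ⟨⟨Q, W⟩, hF, hmax⟩ := isCompact_setOf_feas5.exists_isMaxOn ⟨(Q₀, W₀), hF₀⟩
    ((continuousOn_phi5 hs hσs).mono fun x hx => hx.2.1)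
  refine ⟨Q.rankOneCompression hs, W + (Q - Q.rankOneCompression hs),
    hF.transfer ht0.le (hF.1.rankOneCompression hs) (hF.1.sub_rankOneCompression hs),
    Q.rank_rankOneCompression_le hs, fun Q' W' hF' => ?_⟩
  rw [phi5_transfer (hF.1.dotProduct_rankOneCompression_mulVec_self hs)]
  exact isMaxOn_iff.mp hmax (Q', W') hF'

/-- Theorem 2: if `F_t ≠ ∅`, there is a maximizer of `φ` on `F_t`
whose `Q`-component has rank at most one. -/
theorem stmt5 (n K L : ℕ) (hn : 1 ≤ n) (hK : 1 ≤ K) (hL : 1 ≤ L)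
    (hs : Fin n → ℂ) (he : Fin K → (Fin n → ℂ)) (hl : Fin L → (Fin n → ℂ))
    (σs σe P : ℝ) (p : Fin n → ℝ) (E : Fin L → ℝ) (t : ℝ)
    (hσs : 0 < σs) (hσe : 0 < σe) (hP : 0 < P) (hp : ∀ i, 0 < p i)
    (hE : ∀ l, 0 < E l) (ht0 : 0 < t) (ht1 : t ≤ 1)
    (hne : ∃ Q W, Feas5 n K L he hl σe P p E t Q W) :
    ∃ Qs Ws, Feas5 n K L he hl σe P p E t Qs Ws ∧ Qs.rank ≤ 1 ∧
      ∀ Q W, Feas5 n K L he hl σe P p E t Q W →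
        phi5 n hs σs Q W ≤ phi5 n hs σs Qs Ws :=
  stmt5_general n K L hs he hl σs σe P p E t hσs ht0 hne
end

section
/- (Sufficiency of the robust energy-harvesting constraint.) Let w, h̄ ∈ ℂⁿ, let E ≥ 0 and ε ≥ 0 be reals, and suppose that the inner product h̄^H w is real (its imaginary part is zero) and that Re(h̄^H w) ≥ √E + ε·‖w‖. Then for every e ∈ ℂⁿ with ‖e‖ ≤ ε one has |(h̄ + e)^H w|² ≥ E. -/
theorem re_inner_sub_norm_mul_norm_le_norm_inner_add {𝕜 E : Type*} [RCLike 𝕜]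
    [NormedAddCommGroup E] [InnerProductSpace 𝕜 E] (h e w : E) :
    RCLike.re (inner 𝕜 h w) - ‖e‖ * ‖w‖ ≤ ‖inner 𝕜 (h + e) w‖ :=
  calc RCLike.re (inner 𝕜 h w) - ‖e‖ * ‖w‖
      ≤ ‖inner 𝕜 h w‖ - ‖inner 𝕜 e w‖ :=
        sub_le_sub (RCLike.re_le_norm _) (norm_inner_le_norm e w)
    _ ≤ ‖inner 𝕜 h w + inner 𝕜 e w‖ := by
        simpa using norm_sub_norm_le (inner 𝕜 h w) (-inner 𝕜 e w)
    _ = ‖inner 𝕜 (h + e) w‖ := by rw [inner_add_left]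

theorem stmt12_general (n : ℕ) (w hbar : EuclideanSpace ℂ (Fin n)) (E ε : ℝ)
    (hre : Real.sqrt E + ε * ‖w‖ ≤ (inner ℂ hbar w : ℂ).re) :
    ∀ e : EuclideanSpace ℂ (Fin n), ‖e‖ ≤ ε →
      E ≤ ‖(inner ℂ (hbar + e) w : ℂ)‖ ^ 2 := by
  intro e he
  have hperturb := re_inner_sub_norm_mul_norm_le_norm_inner_add (𝕜 := ℂ) hbar e w
  have hew : ‖e‖ * ‖w‖ ≤ ε * ‖w‖ := mul_le_mul_of_nonneg_right he (norm_nonneg w)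
  rw [RCLike.re_to_complex] at hperturb
  exact (Real.sqrt_le_iff.mp (by linarith)).2

/-- sufficiency of the robust energy-harvesting constraint:
if `h̄^H w` is real and `Re(h̄^H w) ≥ √E + ε‖w‖`, then `|(h̄+e)^H w|² ≥ E`
for every `e` with `‖e‖ ≤ ε`. -/
theorem stmt12 (n : ℕ) (w hbar : EuclideanSpace ℂ (Fin n)) (E ε : ℝ)
    (hE : 0 ≤ E) (hε : 0 ≤ ε)
    (him : (inner ℂ hbar w : ℂ).im = 0)
    (hre : Real.sqrt E + ε * ‖w‖ ≤ (inner ℂ hbar w : ℂ).re) :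
    ∀ e : EuclideanSpace ℂ (Fin n), ‖e‖ ≤ ε →
      E ≤ ‖(inner ℂ (hbar + e) w : ℂ)‖ ^ 2 :=
  stmt12_general n w hbar E ε hre
end
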